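/- Let F be a semifield over 𝔽_q with dim_{𝔽_q} F = n. Then the semifield Lie algebra L(F) is a Lie algebra over 𝔽_q of dimension 3n which is nilpotent of class 2 and Camina, with L(F)' = Z(L(F)) = {(0,0,c) : c ∈ F} and dim(L(F)/L(F)') = 2n; moreover A* = {(a,0,c) : a,c ∈ F} and B* = {(0,b,c) : b,c ∈ F} are abelian Lie subalgebras of L(F) of dimension 2n. If additionally the multiplication of F is associative and commutative (so F ≅ 𝔽_{q^n}), then L(F) is isomorphic to U_3(q^n) as an 𝔽_q-Lie algebra. -/

import Mathlib

open Module

section BasicDefs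

/-- The centralizer of `x` in a Lie algebra, as a submodule. -/
def lieCentralizer (K : Type*) [CommRing K] {L : Type*} [LieRing L] [LieAlgebra K L]
    (x : L) : Submodule K L where
  carrier := {y : L | ⁅x, y⁆ = 0}
  add_mem' := by
    intro a b ha hb
    simp only [Set.mem_setOf_eq, lie_add] at *
    rw [ha, hb, add_zero]
  zero_mem' := by simp
  smul_mem' := by
    intro c a ha
    simp only [Set.mem_setOf_eq, lie_smul] at *
    rw [ha, smul_zero]

/-- The center of a Lie algebra, as a submodule. -/
def lieCenterSub (K : Type*) [CommRing K] (L : Type*) [LieRing L] [LieAlgebra K L] :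
    Submodule K L where
  carrier := {z : L | ∀ y : L, ⁅z, y⁆ = 0}
  add_mem' := by
    intro a b ha hb y
    rw [add_lie, ha y, hb y, add_zero]
  zero_mem' := fun y => zero_lie y
  smul_mem' := by
    intro c a ha y
    rw [smul_lie, ha y, smul_zero]

/-- `gammaSub K L k` is the `(k+1)`-st term `γ_{k+1}(L)` of the lower central series, so that
`gammaSub K L 0 = γ₁(L) = L` and `γ_{i+1}(L) = [L, γ_i(L)]`. -/
def gammaSub (K : Type*) [CommRing K] (L : Type*) [LieRing L] [LieAlgebra K L] :
    ℕ → Submodule K L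
  | 0 => ⊤
  | k + 1 => Submodule.span K {z : L | ∃ x : L, ∃ y ∈ gammaSub K L k, ⁅x, y⁆ = z}

/-- The derived subalgebra `L' = [L, L]` as a submodule. -/
def derivedSub (K : Type*) [CommRing K] (L : Type*) [LieRing L] [LieAlgebra K L] :
    Submodule K L :=
  gammaSub K L 1

/-- `L` is 3-step nilpotent: `γ₄(L) = 0` and `γ₃(L) ≠ 0`. -/
def IsThreeStepNilpotentAlg (K : Type*) [CommRing K] (L : Type*) [LieRing L]
    [LieAlgebra K L] : Prop :=
  gammaSub K L 3 = ⊥ ∧ gammaSub K L 2 ≠ ⊥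

/-- `L` is a stem Lie algebra: `Z(L) ⊆ L'`. -/
def IsStemAlg (K : Type*) [CommRing K] (L : Type*) [LieRing L] [LieAlgebra K L] : Prop :=
  lieCenterSub K L ≤ derivedSub K L

/-- The breadth of an element: `dim L - dim C_L(x)`. -/
noncomputable def lieBreadth (K : Type*) [CommRing K] {L : Type*} [LieRing L]
    [LieAlgebra K L] (x : L) : ℕ :=
  finrank K L - finrank K (lieCentralizer K x)

/-- `L` has breadth type `(0, n)`: `L` is non-abelian and every non-central element has
breadth exactly `n`. -/
def HasBreadthTypeZeroN (K : Type*) [CommRing K] (L : Type*) [LieRing L] [LieAlgebra K L]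
    (n : ℕ) : Prop :=
  (∃ a b : L, ⁅a, b⁆ ≠ 0) ∧ ∀ x : L, x ∉ lieCenterSub K L → lieBreadth K x = n

/-- The image `[x, L]` of `ad x`, as a submodule. -/
def adImage (K : Type*) [CommRing K] {L : Type*} [LieRing L] [LieAlgebra K L] (x : L) :
    Submodule K L where
  carrier := {z : L | ∃ y : L, ⁅x, y⁆ = z}
  add_mem' := by
    rintro a b ⟨ya, rfl⟩ ⟨yb, rfl⟩
    exact ⟨ya + yb, lie_add x ya yb⟩
  zero_mem' := ⟨0, lie_zero x⟩
  smul_mem' := by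
    rintro c a ⟨y, rfl⟩
    exact ⟨c • y, lie_smul c x y⟩

/-- `L` is a Camina Lie algebra: `[x, L] = L'` for every `x ∉ L'`. -/
def IsCaminaAlg (K : Type*) [CommRing K] (L : Type*) [LieRing L] [LieAlgebra K L] : Prop :=
  ∀ x : L, x ∉ derivedSub K L → adImage K x = derivedSub K L

end BasicDefs

section G5

/-- The underlying type of the Lie algebra `𝔤_m`: quintuples over `R`. -/
abbrev G5 (R : Type*) := R × R × R × R × R

namespace G5

variable {R : Type*} [CommRing R]

/-- The bracket `[(a,b,c,d,e),(x,y,z,u,v)] = (0,0, ay-bx, ay-bx+2cx-2az, ay-bx+2bz-2cy)`. -/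
def br (P Q : G5 R) : G5 R :=
  (0, 0,
    P.1 * Q.2.1 - P.2.1 * Q.1,
    P.1 * Q.2.1 - P.2.1 * Q.1 + 2 * P.2.2.1 * Q.1 - 2 * P.1 * Q.2.2.1,
    P.1 * Q.2.1 - P.2.1 * Q.1 + 2 * P.2.1 * Q.2.2.1 - 2 * P.2.2.1 * Q.2.1)

private lemma add_br (P Q N : G5 R) : br (P + Q) N = br P N + br Q N := by
  obtain ⟨a, b, c, d, e⟩ := P
  obtain ⟨a', b', c', d', e'⟩ := Q
  obtain ⟨x, y, z, u, v⟩ := N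
  simp only [br, Prod.mk_add_mk, Prod.mk.injEq]
  and_intros <;> ring

private lemma br_add (P Q N : G5 R) : br P (Q + N) = br P Q + br P N := by
  obtain ⟨a, b, c, d, e⟩ := P
  obtain ⟨a', b', c', d', e'⟩ := Q
  obtain ⟨x, y, z, u, v⟩ := N
  simp only [br, Prod.mk_add_mk, Prod.mk.injEq]
  and_intros <;> ring

private lemma br_self (P : G5 R) : br P P = 0 := by
  obtain ⟨a, b, c, d, e⟩ := P
  simp only [br, Prod.mk_eq_zero]
  and_intros <;> first | ring | trivial

private lemma br_leibniz (P Q N : G5 R) : br P (br Q N) = br (br P Q) N + br Q (br P N) := by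
  obtain ⟨a, b, c, d, e⟩ := P
  obtain ⟨a', b', c', d', e'⟩ := Q
  obtain ⟨x, y, z, u, v⟩ := N
  simp only [br, Prod.mk_add_mk, Prod.mk.injEq]
  and_intros <;> ring

instance (priority := 2000) instLieRing : LieRing (G5 R) :=
  { (inferInstance : AddCommGroup (G5 R)) with
    bracket := br
    add_lie := add_br
    lie_add := br_add
    lie_self := br_self
    leibniz_lie := br_leibniz }

@[simp] lemma bracket_def (P Q : G5 R) : ⁅P, Q⁆ = br P Q := rfl

variable {K : Type*} [CommRing K] [Algebra K R]

private lemma br_smul (t : K) (P Q : G5 R) : br P (t • Q) = t • br P Q := by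
  obtain ⟨a, b, c, d, e⟩ := P
  obtain ⟨x, y, z, u, v⟩ := Q
  simp only [br, Prod.smul_mk, Prod.mk.injEq]
  and_intros <;> simp only [Algebra.smul_def] <;> ring

instance (priority := 2000) instLieAlgebra : LieAlgebra K (G5 R) :=
  { (inferInstance : Module K (G5 R)) with
    lie_smul := br_smul }

end G5

end G5

attribute [local instance 100] LieRing.ofAssociativeRing

section U3

private lemma mul_strictUpper {K' : Type*} [CommRing K'] {M N : Matrix (Fin 3) (Fin 3) K'}
    (hM : ∀ i j : Fin 3, j ≤ i → M i j = 0) (hN : ∀ i j : Fin 3, j ≤ i → N i j = 0) :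
    ∀ i j : Fin 3, j ≤ i → (M * N) i j = 0 := by
  intro i j hij
  rw [Matrix.mul_apply]
  apply Finset.sum_eq_zero
  intro k _
  rcases le_or_gt k i with h | h
  · rw [hM i k h, zero_mul]
  · rw [hN k j (hij.trans h.le), mul_zero]

/-- The Lie algebra (over `K`) of 3×3 strictly upper triangular matrices with entries
in `K'`, with bracket `[A, B] = AB - BA`. -/
def U3 (K K' : Type*) [CommRing K] [CommRing K'] [Algebra K K'] :
    LieSubalgebra K (Matrix (Fin 3) (Fin 3) K') where
  carrier := {M : Matrix (Fin 3) (Fin 3) K' | ∀ i j : Fin 3, j ≤ i → M i j = 0}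
  add_mem' := by
    intro a b ha hb i j hij
    simp only [Matrix.add_apply, ha i j hij, hb i j hij, add_zero]
  zero_mem' := fun i j _ => rfl
  smul_mem' := by
    intro c M hM i j hij
    simp only [Matrix.smul_apply, hM i j hij, smul_zero]
  lie_mem' := by
    intro M N hM hN i j hij
    have h1 : (M * N) i j = 0 := mul_strictUpper hM hN i j hij
    have h2 : (N * M) i j = 0 := mul_strictUpper hN hM i j hij
    simp only [Ring.lie_def, Matrix.sub_apply, h1, h2, sub_zero]

end U3

section Semifield

/-- A (finite-dimensional) semifield structure over `K` on the `K`-vector space `F`: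
a `K`-bilinear multiplication with a two-sided identity and no zero divisors
(multiplication need not be associative). -/
structure SemifieldStruct (K F : Type*) [Field K] [AddCommGroup F] [Module K F] where
  mul : F →ₗ[K] F →ₗ[K] F
  one : F
  one_ne_zero : one ≠ 0
  one_mul : ∀ a : F, mul one a = a
  mul_one : ∀ a : F, mul a one = a
  eq_zero_or_eq_zero_of_mul_eq_zero : ∀ a b : F, mul a b = 0 → a = 0 ∨ b = 0

variable {K F : Type*} [Field K] [AddCommGroup F] [Module K F]

/-- The bracket of the semifield Lie algebra `L(F)`:
`[(a₁,b₁,c₁),(a₂,b₂,c₂)] = (0, 0, a₁·b₂ − a₂·b₁)`. -/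
def lfbr (S : SemifieldStruct K F) (P Q : F × F × F) : F × F × F :=
  (0, 0, S.mul P.1 Q.2.1 - S.mul Q.1 P.2.1)

private lemma lfbr_add_left (S : SemifieldStruct K F) (P Q N : F × F × F) :
    lfbr S (P + Q) N = lfbr S P N + lfbr S Q N := by
  simp only [lfbr, Prod.fst_add, Prod.snd_add, map_add, LinearMap.add_apply,
    Prod.mk_add_mk, Prod.mk.injEq, add_zero]
  and_intros <;> first | abel | trivial

private lemma lfbr_add_right (S : SemifieldStruct K F) (P Q N : F × F × F) :
    lfbr S P (Q + N) = lfbr S P Q + lfbr S P N := by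
  simp only [lfbr, Prod.fst_add, Prod.snd_add, map_add, LinearMap.add_apply,
    Prod.mk_add_mk, Prod.mk.injEq, add_zero]
  and_intros <;> first | abel | trivial

private lemma lfbr_self (S : SemifieldStruct K F) (P : F × F × F) : lfbr S P P = 0 := by
  simp only [lfbr, sub_self, Prod.mk_eq_zero]
  and_intros <;> trivial

private lemma lfbr_leibniz (S : SemifieldStruct K F) (P Q N : F × F × F) :
    lfbr S P (lfbr S Q N) = lfbr S (lfbr S P Q) N + lfbr S Q (lfbr S P N) := by
  simp only [lfbr, map_zero, LinearMap.zero_apply, sub_zero, zero_sub, map_sub,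
    LinearMap.sub_apply, Prod.mk_add_mk, Prod.mk.injEq, add_zero]

/-- The Lie ring structure of the semifield Lie algebra `L(F)` on `F × F × F`. -/
@[reducible]
def lfLieRing (S : SemifieldStruct K F) : LieRing (F × F × F) :=
  { (inferInstance : AddCommGroup (F × F × F)) with
    bracket := lfbr S
    add_lie := lfbr_add_left S
    lie_add := lfbr_add_right S
    lie_self := lfbr_self S
    leibniz_lie := lfbr_leibniz S }

private lemma lfbr_smul (S : SemifieldStruct K F) (t : K) (P Q : F × F × F) :
    lfbr S P (t • Q) = t • lfbr S P Q := by
  simp only [lfbr, Prod.smul_fst, Prod.smul_snd, map_smul, LinearMap.smul_apply,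
    Prod.smul_mk, Prod.mk.injEq, smul_zero, smul_sub]

/-- The Lie algebra structure of the semifield Lie algebra `L(F)` on `F × F × F`. -/
@[reducible]
def lfLieAlgebra (S : SemifieldStruct K F) :
    letI := lfLieRing S
    LieAlgebra K (F × F × F) :=
  letI := lfLieRing S
  { (inferInstance : Module K (F × F × F)) with
    lie_smul := lfbr_smul S }

end Semifield


section Aux

open Module

namespace SFAux

variable (K F : Type*) [Field K] [AddCommGroup F] [Module K F]

/-- The submodule `{(0,0,c)}`. -/
def zSub : Submodule K (F × F × F) :=
  (⊥ : Submodule K F).prod ((⊥ : Submodule K F).prod ⊤)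

lemma mem_zSub (P : F × F × F) : P ∈ zSub K F ↔ P.1 = 0 ∧ P.2.1 = 0 := by
  simp [zSub]

/-- The submodule `{(a,0,c)}`. -/
def aSub : Submodule K (F × F × F) :=
  (⊤ : Submodule K F).prod ((⊥ : Submodule K F).prod ⊤)

lemma mem_aSub (P : F × F × F) : P ∈ aSub K F ↔ P.2.1 = 0 := by
  simp [aSub]

/-- The submodule `{(0,b,c)}`. -/
def bSub : Submodule K (F × F × F) :=
  (⊥ : Submodule K F).prod ⊤

lemma mem_bSub (P : F × F × F) : P ∈ bSub K F ↔ P.1 = 0 := by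
  simp [bSub]

/-- `F ≃ zSub`. -/
def zEquiv : F ≃ₗ[K] zSub K F where
  toFun c := ⟨(0, 0, c), by simp [mem_zSub]⟩
  map_add' a b := by ext <;> simp
  map_smul' t a := by ext <;> simp
  invFun P := P.1.2.2
  left_inv c := rfl
  right_inv := by
    rintro ⟨⟨a, b, c⟩, h⟩
    rw [mem_zSub] at h
    obtain ⟨h1, h2⟩ := h
    simp only at h1 h2
    subst h1; subst h2; rfl

/-- `F × F ≃ aSub`. -/
def aEquiv : (F × F) ≃ₗ[K] aSub K F where
  toFun p := ⟨(p.1, 0, p.2), by simp [mem_aSub]⟩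
  map_add' a b := by ext <;> simp
  map_smul' t a := by ext <;> simp
  invFun P := (P.1.1, P.1.2.2)
  left_inv c := rfl
  right_inv := by
    rintro ⟨⟨a, b, c⟩, h⟩
    rw [mem_aSub] at h
    simp only at h
    subst h; rfl

/-- `F × F ≃ bSub`. -/
def bEquiv : (F × F) ≃ₗ[K] bSub K F where
  toFun p := ⟨(0, p.1, p.2), by simp [mem_bSub]⟩
  map_add' a b := by ext <;> simp
  map_smul' t a := by ext <;> simp
  invFun P := (P.1.2.1, P.1.2.2)
  left_inv c := rfl
  right_inv := by
    rintro ⟨⟨a, b, c⟩, h⟩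
    rw [mem_bSub] at h
    simp only at h
    subst h; rfl

variable {K F}

lemma lfbr_apply (S : SemifieldStruct K F) (P Q : F × F × F) :
    lfbr S P Q = (0, 0, S.mul P.1 Q.2.1 - S.mul Q.1 P.2.1) := rfl

lemma zmem_derived (S : SemifieldStruct K F) (c : F) :
    letI := lfLieRing S
    letI := lfLieAlgebra (K := K) S
    ((0, 0, c) : F × F × F) ∈ derivedSub K (F × F × F) := by
  letI := lfLieRing S
  letI := lfLieAlgebra (K := K) S
  apply Submodule.subset_span
  refine ⟨(c, 0, 0), (0, S.one, 0), Submodule.mem_top, ?_⟩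
  show lfbr S _ _ = _
  rw [lfbr_apply]
  simp [S.mul_one]

lemma derived_eq (S : SemifieldStruct K F) :
    letI := lfLieRing S
    letI := lfLieAlgebra (K := K) S
    derivedSub K (F × F × F) = zSub K F := by
  letI := lfLieRing S
  letI := lfLieAlgebra (K := K) S
  apply le_antisymm
  · apply Submodule.span_le.2
    rintro z ⟨x, y, -, rfl⟩
    show lfbr S x y ∈ _
    rw [SetLike.mem_coe, mem_zSub, lfbr_apply]
    exact ⟨rfl, rfl⟩
  · intro P hP
    rw [mem_zSub] at hP
    have hP' : P = (0, 0, P.2.2) := by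
      obtain ⟨a, b, c⟩ := P
      simp only at hP
      rw [hP.1, hP.2]
    rw [hP']
    exact zmem_derived S P.2.2

lemma center_eq (S : SemifieldStruct K F) :
    letI := lfLieRing S
    letI := lfLieAlgebra (K := K) S
    lieCenterSub K (F × F × F) = zSub K F := by
  letI := lfLieRing S
  letI := lfLieAlgebra (K := K) S
  ext P
  rw [mem_zSub]
  constructor
  · intro h
    have h1 := h (0, S.one, 0)
    have h2 := h (S.one, 0, 0)
    rw [show (⁅P, ((0 : F), S.one, (0:F))⁆ : F × F × F) = lfbr S P (0, S.one, 0) from rfl,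
      lfbr_apply] at h1
    rw [show (⁅P, (S.one, (0 : F), (0:F))⁆ : F × F × F) = lfbr S P (S.one, 0, 0) from rfl,
      lfbr_apply] at h2
    simp only [map_zero, LinearMap.zero_apply, sub_zero, zero_sub, Prod.mk_eq_zero,
      neg_eq_zero, S.mul_one, S.one_mul] at h1 h2
    exact ⟨h1.2.2, h2.2.2⟩
  · rintro ⟨h1, h2⟩ Q
    show lfbr S P Q = 0
    rw [lfbr_apply, h1, h2]
    simp

lemma gamma2_eq_bot (S : SemifieldStruct K F) :
    letI := lfLieRing S
    letI := lfLieAlgebra (K := K) S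
    gammaSub K (F × F × F) 2 = ⊥ := by
  letI := lfLieRing S
  letI := lfLieAlgebra (K := K) S
  show Submodule.span K _ = ⊥
  rw [Submodule.span_eq_bot]
  rintro z ⟨x, y, hy, rfl⟩
  have hy' : y ∈ zSub K F := by
    rw [← derived_eq S]; exact hy
  rw [mem_zSub] at hy'
  show lfbr S x y = 0
  rw [lfbr_apply, hy'.1, hy'.2]
  simp

lemma gamma1_ne_bot (S : SemifieldStruct K F) :
    letI := lfLieRing S
    letI := lfLieAlgebra (K := K) S
    gammaSub K (F × F × F) 1 ≠ ⊥ := by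
  letI := lfLieRing S
  letI := lfLieAlgebra (K := K) S
  intro h
  have h1 : ((0, 0, S.one) : F × F × F) ∈ derivedSub K (F × F × F) := zmem_derived S S.one
  rw [show derivedSub K (F × F × F) = gammaSub K (F × F × F) 1 from rfl, h,
    Submodule.mem_bot, Prod.mk_eq_zero, Prod.mk_eq_zero] at h1
  exact S.one_ne_zero h1.2.2

lemma camina (S : SemifieldStruct K F) [Module.Finite K F] :
    letI := lfLieRing S
    letI := lfLieAlgebra (K := K) S
    IsCaminaAlg K (F × F × F) := by
  letI := lfLieRing S
  letI := lfLieAlgebra (K := K) S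
  intro x hx
  rw [derived_eq S] at hx ⊢
  rw [mem_zSub, not_and_or] at hx
  ext z
  rw [mem_zSub]
  constructor
  · rintro ⟨y, rfl⟩
    show (lfbr S x y).1 = 0 ∧ (lfbr S x y).2.1 = 0
    rw [lfbr_apply]
    exact ⟨rfl, rfl⟩
  · rintro ⟨h1, h2⟩
    have hz : z = (0, 0, z.2.2) := by
      obtain ⟨a, b, c⟩ := z
      simp only at h1 h2
      rw [h1, h2]
    rcases hx with ha | hb
    · -- x.1 ≠ 0 : left multiplication by x.1 is surjective
      have hinj : Function.Injective (S.mul x.1) := by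
        rw [← LinearMap.ker_eq_bot, Submodule.eq_bot_iff]
        intro y hy
        rcases S.eq_zero_or_eq_zero_of_mul_eq_zero _ _ hy with h | h
        · exact absurd h ha
        · exact h
      have hsurj := (LinearMap.injective_iff_surjective (f := S.mul x.1)).1 hinj
      obtain ⟨y, hy⟩ := hsurj z.2.2
      refine ⟨(0, y, 0), ?_⟩
      show lfbr S x (0, y, 0) = z
      rw [lfbr_apply, hz]
      simp [hy]
    · -- x.2.1 ≠ 0 : right multiplication by x.2.1 is surjective
      have hinj : Function.Injective (S.mul.flip x.2.1) := by
        rw [← LinearMap.ker_eq_bot, Submodule.eq_bot_iff]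
        intro y hy
        rcases S.eq_zero_or_eq_zero_of_mul_eq_zero _ _ hy with h | h
        · exact h
        · exact absurd h hb
      have hsurj := (LinearMap.injective_iff_surjective (f := S.mul.flip x.2.1)).1 hinj
      obtain ⟨y, hy⟩ := hsurj (-z.2.2)
      refine ⟨(y, 0, 0), ?_⟩
      show lfbr S x (y, 0, 0) = z
      rw [lfbr_apply, hz]
      have : S.mul y x.2.1 = -z.2.2 := hy
      simp [this]

end SFAux

end Aux


section U3Aux

open Module

variable {K F E : Type*} [Field K] [AddCommGroup F] [Module K F]
  [Field E] [Algebra K E]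

private lemma u3_mul_aux {E : Type*} [Field E] (a1 b1 c1 a2 b2 c2 : E) :
    (!![0, 0, a1 * b2 - a2 * b1; 0, 0, 0; 0, 0, 0] : Matrix (Fin 3) (Fin 3) E) =
      !![0, a1, c1; 0, 0, b1; 0, 0, 0] * !![0, a2, c2; 0, 0, b2; 0, 0, 0] -
        !![0, a2, c2; 0, 0, b2; 0, 0, 0] * !![0, a1, c1; 0, 0, b1; 0, 0, 0] := by
  ext i j
  fin_cases i <;> fin_cases j <;>
    simp [Matrix.mul_apply, Fin.sum_univ_three, Matrix.vecHead, Matrix.vecTail] <;> ring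

/-- The forward map of the isomorphism. -/
private noncomputable def u3Fun (e : F ≃ₗ[K] E) (P : F × F × F) : U3 K E :=
  ⟨!![0, e P.1, e P.2.2; 0, 0, e P.2.1; 0, 0, 0], by
    intro i j hij
    fin_cases i <;> fin_cases j <;> first | rfl | exact absurd hij (by decide)⟩

private lemma u3Fun_coe (e : F ≃ₗ[K] E) (P : F × F × F) :
    (u3Fun e P : Matrix (Fin 3) (Fin 3) E) =
      !![0, e P.1, e P.2.2; 0, 0, e P.2.1; 0, 0, 0] := rfl

private lemma u3Fun_add (e : F ≃ₗ[K] E) (P Q : F × F × F) :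
    u3Fun e (P + Q) = u3Fun e P + u3Fun e Q := by
  apply Subtype.ext
  show _ = (u3Fun e P : Matrix (Fin 3) (Fin 3) E) + (u3Fun e Q : Matrix (Fin 3) (Fin 3) E)
  rw [u3Fun_coe, u3Fun_coe, u3Fun_coe]
  ext i j
  fin_cases i <;> fin_cases j <;>
    simp [Matrix.add_apply, Matrix.vecHead, Matrix.vecTail]

private lemma u3Fun_smul (e : F ≃ₗ[K] E) (t : K) (P : F × F × F) :
    u3Fun e (t • P) = t • u3Fun e P := by
  apply Subtype.ext
  show _ = t • (u3Fun e P : Matrix (Fin 3) (Fin 3) E)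
  rw [u3Fun_coe, u3Fun_coe]
  ext i j
  fin_cases i <;> fin_cases j <;>
    simp [Matrix.smul_apply, Matrix.vecHead, Matrix.vecTail]

private lemma u3Fun_lie (S : SemifieldStruct K F) (e : F ≃ₗ[K] E)
    (hmul : ∀ a b : F, e (S.mul a b) = e a * e b) (P Q : F × F × F) :
    letI := lfLieRing S
    letI := lfLieAlgebra (K := K) S
    u3Fun e ⁅P, Q⁆ = ⁅u3Fun e P, u3Fun e Q⁆ := by
  letI := lfLieRing S
  letI := lfLieAlgebra (K := K) S
  apply Subtype.ext
  have key := u3_mul_aux (e P.1) (e P.2.1) (e P.2.2) (e Q.1) (e Q.2.1) (e Q.2.2)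
  rw [← hmul P.1 Q.2.1, ← hmul Q.1 P.2.1, ← map_sub] at key
  rw [LieSubalgebra.coe_bracket, u3Fun_coe, u3Fun_coe, u3Fun_coe, Ring.lie_def]
  have h1 : (⁅P, Q⁆ : F × F × F).1 = 0 := rfl
  have h2 : (⁅P, Q⁆ : F × F × F).2.1 = 0 := rfl
  have h3 : (⁅P, Q⁆ : F × F × F).2.2 = S.mul P.1 Q.2.1 - S.mul Q.1 P.2.1 := rfl
  rw [h1, h2, h3, map_zero]
  exact key

private lemma u3Fun_leftInv (e : F ≃ₗ[K] E) (P : F × F × F) :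
    (e.symm ((u3Fun e P : Matrix (Fin 3) (Fin 3) E) 0 1),
      e.symm ((u3Fun e P : Matrix (Fin 3) (Fin 3) E) 1 2),
      e.symm ((u3Fun e P : Matrix (Fin 3) (Fin 3) E) 0 2)) = P := by
  rw [u3Fun_coe]
  refine Prod.ext ?_ (Prod.ext ?_ ?_) <;> simp

private lemma u3Fun_rightInv (e : F ≃ₗ[K] E) (M : U3 K E) :
    u3Fun e (e.symm ((M : Matrix (Fin 3) (Fin 3) E) 0 1),
      e.symm ((M : Matrix (Fin 3) (Fin 3) E) 1 2),
      e.symm ((M : Matrix (Fin 3) (Fin 3) E) 0 2)) = M := by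
  apply Subtype.ext
  rw [u3Fun_coe]
  ext i j
  fin_cases i <;> fin_cases j <;>
    first
      | exact (M.2 _ _ (by decide)).symm
      | simp

/-- The Lie algebra isomorphism `L(F) ≃ U₃(E)` induced by a multiplicative
linear equivalence `F ≃ E`. -/
noncomputable def u3Equiv (S : SemifieldStruct K F) (e : F ≃ₗ[K] E)
    (hmul : ∀ a b : F, e (S.mul a b) = e a * e b) :
    letI := lfLieRing S
    letI := lfLieAlgebra (K := K) S
    (F × F × F) ≃ₗ⁅K⁆ U3 K E :=
  letI := lfLieRing S
  letI := lfLieAlgebra (K := K) S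
  { toFun := u3Fun e
    map_add' := u3Fun_add e
    map_smul' := u3Fun_smul e
    map_lie' := fun {P Q} => u3Fun_lie S e hmul P Q
    invFun := fun M => (e.symm ((M : Matrix (Fin 3) (Fin 3) E) 0 1),
      e.symm ((M : Matrix (Fin 3) (Fin 3) E) 1 2),
      e.symm ((M : Matrix (Fin 3) (Fin 3) E) 0 2))
    left_inv := fun P => u3Fun_leftInv e P
    right_inv := fun M => u3Fun_rightInv e M }

end U3Aux

/-- For a semifield `F` over `𝔽_q` with `dim_{𝔽_q} F = n`, the semifield
Lie algebra `L(F)` (on `F × F × F`, with the Lie ring/algebra structure `lfLieRing S`,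
`lfLieAlgebra S` whose bracket is `[(a₁,b₁,c₁),(a₂,b₂,c₂)] = (0,0,a₁·b₂ − a₂·b₁)`) has
dimension `3n`, is nilpotent of class 2 and Camina, with
`L(F)' = Z(L(F)) = {(0,0,c)}` and `dim (L(F)/L(F)') = 2n`; `A* = {(a,0,c)}` and
`B* = {(0,b,c)}` are abelian subalgebras of dimension `2n`; and if the multiplication of `F`
is associative and commutative then `L(F) ≅ U₃(q^n)` (with `E = 𝔽_{q^n}`). -/
theorem stmt19 (q n : ℕ)
    (K : Type*) [Field K] [Fintype K] (hK : Fintype.card K = q)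
    (F : Type*) [AddCommGroup F] [Module K F] [Module.Finite K F]
    (S : SemifieldStruct K F) (hF : finrank K F = n)
    (E : Type*) [Field E] [Algebra K E] [FiniteDimensional K E]
    (hE : Module.finrank K E = n) :
    letI := lfLieRing S
    letI := lfLieAlgebra (K := K) S
    (∀ P Q : F × F × F, ⁅P, Q⁆ = ((0, 0, S.mul P.1 Q.2.1 - S.mul Q.1 P.2.1) : F × F × F)) ∧
    finrank K (F × F × F) = 3 * n ∧
    (gammaSub K (F × F × F) 2 = ⊥ ∧ gammaSub K (F × F × F) 1 ≠ ⊥) ∧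
    IsCaminaAlg K (F × F × F) ∧
    (∀ P : F × F × F, P ∈ derivedSub K (F × F × F) ↔ P.1 = 0 ∧ P.2.1 = 0) ∧
    derivedSub K (F × F × F) = lieCenterSub K (F × F × F) ∧
    finrank K ((F × F × F) ⧸ derivedSub K (F × F × F)) = 2 * n ∧
    (∃ A : LieSubalgebra K (F × F × F), (∀ P : F × F × F, P ∈ A ↔ P.2.1 = 0) ∧
      finrank K A = 2 * n ∧ ∀ x ∈ A, ∀ y ∈ A, ⁅x, y⁆ = 0) ∧
    (∃ B : LieSubalgebra K (F × F × F), (∀ P : F × F × F, P ∈ B ↔ P.1 = 0) ∧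
      finrank K B = 2 * n ∧ ∀ x ∈ B, ∀ y ∈ B, ⁅x, y⁆ = 0) ∧
    ((∀ a b c : F, S.mul (S.mul a b) c = S.mul a (S.mul b c)) →
     (∀ a b : F, S.mul a b = S.mul b a) →
     Nonempty ((F × F × F) ≃ₗ⁅K⁆ U3 K E)) := by
  letI := lfLieRing S
  letI := lfLieAlgebra (K := K) S
  open SFAux in
  refine ⟨fun P Q => rfl, ?_, ⟨gamma2_eq_bot S, gamma1_ne_bot S⟩, camina S, ?_, ?_, ?_, ?_, ?_, ?_⟩
  · simp [Module.finrank_prod, hF]; ring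
  · intro P
    rw [derived_eq S, mem_zSub]
  · rw [derived_eq S, center_eq S]
  · have h := Submodule.finrank_quotient_add_finrank (derivedSub K (F × F × F))
    rw [derived_eq S] at h
    have h2 : finrank K (zSub K F) = n := by
      rw [← (zEquiv K F).finrank_eq, hF]
    have h3 : finrank K (F × F × F) = 3 * n := by
      simp [Module.finrank_prod, hF]; ring
    rw [derived_eq S]
    omega
  · -- A*
    have hmem : ∀ x y : F × F × F, x ∈ aSub K F → y ∈ aSub K F → ⁅x, y⁆ = 0 := by
      intro x y hx hy
      rw [mem_aSub] at hx hy
      show lfbr S x y = 0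
      rw [lfbr_apply, hx, hy]
      simp
    refine ⟨{ aSub K F with lie_mem' := ?_ }, ?_, ?_, ?_⟩
    · intro x y hx hy
      rw [hmem x y hx hy]
      exact (aSub K F).zero_mem
    · intro P
      exact mem_aSub K F P
    · show finrank K (aSub K F) = 2 * n
      rw [← (aEquiv K F).finrank_eq, Module.finrank_prod, hF]
      ring
    · intro x hx y hy
      exact hmem x y hx hy
  · -- B*
    have hmem : ∀ x y : F × F × F, x ∈ bSub K F → y ∈ bSub K F → ⁅x, y⁆ = 0 := by
      intro x y hx hy
      rw [mem_bSub] at hx hy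
      show lfbr S x y = 0
      rw [lfbr_apply, hx, hy]
      simp
    refine ⟨{ bSub K F with lie_mem' := ?_ }, ?_, ?_, ?_⟩
    · intro x y hx hy
      rw [hmem x y hx hy]
      exact (bSub K F).zero_mem
    · intro P
      exact mem_bSub K F P
    · show finrank K (bSub K F) = 2 * n
      rw [← (bEquiv K F).finrank_eq, Module.finrank_prod, hF]
      ring
    · intro x hx y hy
      exact hmem x y hx hy
  · -- isomorphism with U3
    intro hassoc hcomm
    letI instCR : CommRing F :=
      { (inferInstance : AddCommGroup F) with
        mul := fun a b => S.mul a b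
        one := S.one
        mul_assoc := hassoc
        one_mul := S.one_mul
        mul_one := S.mul_one
        mul_comm := hcomm
        left_distrib := fun a b c => map_add (S.mul a) b c
        right_distrib := fun a b c => by
          show S.mul (a + b) c = S.mul a c + S.mul b c
          rw [map_add]; rfl
        zero_mul := fun a => by show S.mul 0 a = 0; rw [map_zero]; rfl
        mul_zero := fun a => map_zero (S.mul a) }
    haveI : Nontrivial F := ⟨S.one, 0, S.one_ne_zero⟩
    haveI : NoZeroDivisors F :=
      ⟨fun {a b} h => S.eq_zero_or_eq_zero_of_mul_eq_zero a b h⟩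
    haveI : IsDomain F := NoZeroDivisors.to_isDomain F
    letI : DecidableEq F := Classical.decEq F
    haveI : Finite F := Module.finite_of_finite K
    letI : Fintype F := Fintype.ofFinite F
    letI instFF : Field F := Fintype.fieldOfDomain F
    letI instAlg : Algebra K F := Algebra.ofModule
      (fun r x y => by show S.mul (r • x) y = r • S.mul x y; rw [map_smul]; rfl)
      (fun r x y => map_smul (S.mul x) r y)
    haveI : Finite E := Module.finite_of_finite K
    letI : Fintype E := Fintype.ofFinite E
    have hcard : Fintype.card E = Fintype.card F := by
      rw [card_eq_pow_finrank (K := K) (V := E), card_eq_pow_finrank (K := K) (V := F), hE, hF]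
    haveI h1 : Polynomial.IsSplittingField K F
        (Polynomial.X ^ Fintype.card F - Polynomial.X) :=
      FiniteField.isSplittingField_sub F K
    haveI h2 : Polynomial.IsSplittingField K E
        (Polynomial.X ^ Fintype.card F - Polynomial.X) := by
      rw [← hcard]
      exact FiniteField.isSplittingField_sub E K
    let e1 := Polynomial.IsSplittingField.algEquiv F
      (Polynomial.X ^ Fintype.card F - Polynomial.X : Polynomial K)
    let e2 := Polynomial.IsSplittingField.algEquiv E
      (Polynomial.X ^ Fintype.card F - Polynomial.X : Polynomial K)
    let e : F ≃ₐ[K] E := e1.trans e2.symm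
    exact ⟨u3Equiv S e.toLinearEquiv (fun a b => map_mul e a b)⟩
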